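/- Let γ ∈ (0, √2) and let α be real with α < −γ/2. Then the integral ∫_{𝔻²} |w₁|^{−γα−2} |w₂|^{−γα−2} |w₁−w₂|^{−γ²} |dw₁|² |dw₂|² is finite. -/

import Mathlib

/-
Write `b = γ²` and `a = -γα - 2`, so that `b/2 - 2 < a` and `b < 2`. On the unit disc, lowering `a`
only increases the integrand, so we may assume `a ≤ -b/2`. Then weighted AM-GM bounds the kernel
`|w₁|^a |w₂|^a |w₁ - w₂|^(-b)` by the sum of `(|w₁| |w₂|)^β`, `(|w₁| |w₁ - w₂|)^β` and
`(|w₂| |w₁ - w₂|)^β`, where `β = a - b/2 > -2`. Each of these is a product of two radial powers that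
are locally integrable in the plane, in the coordinates `(w₁, w₂)` or after the shear
`(w₁, w₂) ↦ (w₂, w₁ - w₂)`.
-/

open MeasureTheory Set

noncomputable def unitDisc : Set ℂ := {w : ℂ | ‖w‖ < 1}

open Metric

/-- The left side is the weighted geometric mean of the three summands on the right, with weights
`(a + b/2)/β`, `-b/(2β)`, `-b/(2β)` for `β = a - b/2`. -/
lemma rpow_mul_rpow_mul_rpow_neg_le {x y d a b : ℝ} (hx : 0 < x) (hy : 0 < y) (hd : 0 < d)
    (hb : 0 < b) (hab : a + b / 2 ≤ 0) :
    x ^ a * y ^ a * d ^ (-b) ≤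
      x ^ (a - b / 2) * y ^ (a - b / 2) + x ^ (a - b / 2) * d ^ (a - b / 2) +
        y ^ (a - b / 2) * d ^ (a - b / 2) := by
  have hβ : a - b / 2 < 0 := by linarith
  set β := a - b / 2
  set p := (a + b / 2) / β
  set q := -b / (2 * β)
  have hp : 0 ≤ p := div_nonneg_of_nonpos hab hβ.le
  have hq : 0 ≤ q := div_nonneg_of_nonpos (by linarith) (by linarith)
  have hβp : β * p = a + b / 2 := mul_div_cancel₀ _ hβ.ne
  have hβq : β * q = -b / 2 := by simp only [q]; field_simp [hβ.ne]
  have hpq : p + q + q = 1 := by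
    apply mul_left_cancel₀ hβ.ne
    rw [mul_add, mul_add, hβp, hβq]; ring
  have hpow : ∀ {u v : ℝ}, 0 < u → 0 < v → ∀ w : ℝ,
      (u ^ β * v ^ β) ^ w = u ^ (β * w) * v ^ (β * w) := by
    intro u v hu hv w
    rw [Real.mul_rpow (by positivity) (by positivity), ← Real.rpow_mul hu.le, ← Real.rpow_mul hv.le]
  have amgm := Real.geom_mean_le_arith_mean3_weighted hp hq hq
    (by positivity : 0 ≤ x ^ β * y ^ β) (by positivity : 0 ≤ x ^ β * d ^ β)
    (by positivity : 0 ≤ y ^ β * d ^ β) hpq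
  rw [hpow hx hy, hpow hx hd, hpow hy hd, hβp, hβq] at amgm
  have hadd {u : ℝ} (hu : 0 < u) (s t : ℝ) : u ^ s * u ^ t = u ^ (s + t) :=
    (Real.rpow_add hu s t).symm
  have h₁ := mul_le_of_le_one_left (by positivity : 0 ≤ x ^ β * y ^ β) (by linarith : p ≤ 1)
  have h₂ := mul_le_of_le_one_left (by positivity : 0 ≤ x ^ β * d ^ β) (by linarith : q ≤ 1)
  have h₃ := mul_le_of_le_one_left (by positivity : 0 ≤ y ^ β * d ^ β) (by linarith : q ≤ 1)
  calc x ^ a * y ^ a * d ^ (-b)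
      = x ^ (a + b / 2) * x ^ (-b / 2) * (y ^ (a + b / 2) * y ^ (-b / 2)) *
          (d ^ (-b / 2) * d ^ (-b / 2)) := by
        rw [hadd hx, hadd hy, hadd hd]; ring_nf
    _ = x ^ (a + b / 2) * y ^ (a + b / 2) * (x ^ (-b / 2) * d ^ (-b / 2)) *
          (y ^ (-b / 2) * d ^ (-b / 2)) := by ring
    _ ≤ _ := amgm
    _ ≤ _ := by linarith

lemma integrableOn_ball_norm_rpow {E : Type*} [NormedAddCommGroup E] [NormedSpace ℝ E]
    [FiniteDimensional ℝ E] [Nontrivial E] [MeasurableSpace E] [BorelSpace E]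
    {μ : Measure E} [μ.IsAddHaarMeasure] {β : ℝ} (hβ : -(Module.finrank ℝ E : ℝ) < β) (r : ℝ) :
    IntegrableOn (fun x : E => ‖x‖ ^ β) (ball 0 r) μ := by
  refine integrableOn_ball_of_norm_le_rpow (C := 1) (α := -β) Module.finrank_pos
    (by linarith) (ae_of_all _ fun x => ?_) (measurable_norm.pow_const β).aestronglyMeasurable
  rw [neg_neg, one_mul, Real.norm_of_nonneg (by positivity)]

namespace MeasureTheory

lemma IntegrableOn.mul_prod {α β 𝕜 : Type*} [MeasurableSpace α] [MeasurableSpace β]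
    [NormedRing 𝕜]
    {μ : Measure α} {ν : Measure β} [SFinite μ] [SFinite ν] {f : α → 𝕜} {g : β → 𝕜}
    {s : Set α} {t : Set β}
    (hf : IntegrableOn f s μ) (hg : IntegrableOn g t ν) :
    IntegrableOn (fun p : α × β => f p.1 * g p.2) (s ×ˢ t) (μ.prod ν) := by
  rw [IntegrableOn, ← Measure.prod_restrict]
  exact Integrable.mul_prod hf hg

lemma IntegrableOn.mul_comp_sub_prod {G 𝕜 : Type*} [NontriviallyNormedField 𝕜]
    [AddGroup G] [MeasurableSpace G] [MeasurableAdd₂ G] [MeasurableNeg G]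
    {μ : Measure G} [SFinite μ] [μ.IsAddRightInvariant] {f g : G → 𝕜} {s t : Set G}
    (hs : MeasurableSet s) (ht : MeasurableSet t)
    (hf : IntegrableOn f s μ) (hg : IntegrableOn g t μ) :
    IntegrableOn (fun p : G × G => f p.2 * g (p.1 - p.2)) {p | p.2 ∈ s ∧ p.1 - p.2 ∈ t}
      (μ.prod μ) := by
  have h := ((integrable_indicator_iff hs).2 hf).convolution_integrand
    (ContinuousLinearMap.mul 𝕜 𝕜) ((integrable_indicator_iff ht).2 hg)
  refine h.integrableOn.congr_fun (fun p hp => ?_)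
    ((measurable_snd hs).inter ((measurable_fst.sub measurable_snd) ht))
  simp [indicator_of_mem hp.1, indicator_of_mem hp.2]

end MeasureTheory

lemma ae_fst_ne_and_snd_ne_and_fst_ne_snd {α : Type*} [MeasurableSpace α] [MeasurableEq α]
    {μ : Measure α} [SFinite μ] [NullSingletonClass μ] (c : α) :
    ∀ᵐ p ∂μ.prod μ, p.1 ≠ c ∧ p.2 ≠ c ∧ p.1 ≠ p.2 := by
  rw [Measure.ae_prod_iff_ae_ae (by measurability)]
  filter_upwards [μ.ae_ne c] with x hx
  filter_upwards [μ.ae_ne c, μ.ae_ne x] with y hyc hyx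
  exact ⟨hx, hyc, hyx.symm⟩

lemma integrableOn_ball_prod_norm_rpow_mul_norm_sub_rpow {a b : ℝ} (hb : 0 < b)
    (ha : b / 2 - 2 < a) (hab : a + b / 2 ≤ 0) (r : ℝ) :
    IntegrableOn (fun p : ℂ × ℂ => ‖p.1‖ ^ a * ‖p.2‖ ^ a * ‖p.1 - p.2‖ ^ (-b))
      (ball 0 r ×ˢ ball 0 r) := by
  have hpow (ρ : ℝ) : IntegrableOn (fun w : ℂ => ‖w‖ ^ (a - b / 2)) (ball 0 ρ) :=
    integrableOn_ball_norm_rpow (by rw [Complex.finrank_real_complex]; push_cast; linarith) ρ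
  have hT₁ := (hpow r).mul_prod (hpow r)
  have hT₃ : IntegrableOn (fun p : ℂ × ℂ => ‖p.2‖ ^ (a - b / 2) * ‖p.1 - p.2‖ ^ (a - b / 2))
      (ball 0 r ×ˢ ball 0 r) := by
    refine (IntegrableOn.mul_comp_sub_prod measurableSet_ball measurableSet_ball (hpow r)
      (hpow (r + r))).mono_set fun p ⟨hp₁, hp₂⟩ => ⟨hp₂, ?_⟩
    rw [mem_ball_zero_iff] at hp₁ hp₂ ⊢
    exact (norm_sub_le _ _).trans_lt (add_lt_add hp₁ hp₂)
  have hT₂ : IntegrableOn (fun p : ℂ × ℂ => ‖p.1‖ ^ (a - b / 2) * ‖p.1 - p.2‖ ^ (a - b / 2))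
      (ball 0 r ×ˢ ball 0 r) := by
    rw [Measure.volume_eq_prod]
    simpa [Function.comp_def, norm_sub_rev] using hT₃.swap
  refine ((hT₁.add hT₂).add hT₃).mono' (by fun_prop) (ae_restrict_of_ae ?_)
  filter_upwards [ae_fst_ne_and_snd_ne_and_fst_ne_snd 0] with p ⟨h₁, h₂, h₁₂⟩
  rw [Real.norm_of_nonneg (by positivity)]
  exact rpow_mul_rpow_mul_rpow_neg_le (norm_pos_iff.2 h₁) (norm_pos_iff.2 h₂)
    (norm_pos_iff.2 (sub_ne_zero.2 h₁₂)) hb hab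

lemma integrableOn_unitBall_prod_norm_rpow_mul_norm_sub_rpow {a b : ℝ} (hb₀ : 0 < b)
    (hb₂ : b < 2) (ha : b / 2 - 2 < a) :
    IntegrableOn (fun p : ℂ × ℂ => ‖p.1‖ ^ a * ‖p.2‖ ^ a * ‖p.1 - p.2‖ ^ (-b))
      (ball 0 1 ×ˢ ball 0 1) := by
  set a₀ := min a (-b / 2)
  have h₀ := integrableOn_ball_prod_norm_rpow_mul_norm_sub_rpow (a := a₀) hb₀
    (lt_min ha (by linarith)) (by linarith [min_le_right a (-b / 2)]) 1
  have hle {w : ℂ} (hw : w ∈ ball 0 1) (hw₀ : w ≠ 0) : ‖w‖ ^ a ≤ ‖w‖ ^ a₀ :=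
    Real.rpow_le_rpow_of_exponent_ge (norm_pos_iff.2 hw₀) (mem_ball_zero_iff.1 hw).le
      (min_le_left _ _)
  refine h₀.mono' (by fun_prop) ?_
  filter_upwards [ae_restrict_mem (measurableSet_ball.prod measurableSet_ball),
    ae_restrict_of_ae (ae_fst_ne_and_snd_ne_and_fst_ne_snd 0)] with p ⟨hp₁, hp₂⟩ ⟨h₁, h₂, _⟩
  rw [Real.norm_of_nonneg (by positivity)]
  gcongr ?_ * ?_ * _
  exacts [hle hp₁ h₁, hle hp₂ h₂]

theorem stmt9 (γ : ℝ) (hγ0 : 0 < γ) (hγ2 : γ < Real.sqrt 2)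
    (α : ℝ) (hα : α < -γ / 2) :
    IntegrableOn (fun p : ℂ × ℂ =>
        ‖p.1‖ ^ (-(γ * α) - 2) * ‖p.2‖ ^ (-(γ * α) - 2) *
          ‖p.1 - p.2‖ ^ (-(γ ^ 2)))
      (unitDisc ×ˢ unitDisc) volume := by
  have hunitDisc : unitDisc = ball 0 1 := Set.ext fun _ => mem_ball_zero_iff.symm
  have hγsq : γ ^ 2 < 2 := (Real.lt_sqrt hγ0.le).1 hγ2
  have hγα : γ * α < γ * (-γ / 2) := mul_lt_mul_of_pos_left hα hγ0
  rw [hunitDisc]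
  exact integrableOn_unitBall_prod_norm_rpow_mul_norm_sub_rpow (by positivity) hγsq
    (by linarith)
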